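/- arXiv:2102.00909 — 3 statements merged into one kernel-verified Lean document; each statement's English description precedes it below -/
import Mathlib

section
/- Let 1.5 ≤ μ < 2 and let p satisfy p_S(3+μ) < p ≤ 2, where p_S(d) is the positive root of 2 + (d+1)p - (d-1)p² = 0. Define s = 1/4 + 1/(2p), α = -3s + μ(p-1) + (2/p)(p-1), and β = -s + 2(p-1) - 1. Then α > 0. -/
noncomputable def pS (d : ℝ) : ℝ := (d + 1 + Real.sqrt (d ^ 2 + 10 * d - 7)) / (2 * (d - 1))

theorem stmt_4 (μ p : ℝ) (hμ1 : 1.5 ≤ μ) (hμ2 : μ < 2)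
    (hp1 : pS (3 + μ) < p) (hp2 : p ≤ 2) :
    0 < -3 * (1 / 4 + 1 / (2 * p)) + μ * (p - 1) + (2 / p) * (p - 1) := by
  set D : ℝ := (3 + μ) ^ 2 + 10 * (3 + μ) - 7 with hD
  have hDval : D = μ ^ 2 + 16 * μ + 32 := by rw [hD]; ring
  have hDpos : 0 < D := by nlinarith
  have hsq : Real.sqrt D ^ 2 = D := Real.sq_sqrt hDpos.le
  have hsqrt_nonneg : 0 ≤ Real.sqrt D := Real.sqrt_nonneg _
  have hsqrt_gt : μ < Real.sqrt D := by
    nlinarith [hsq, hsqrt_nonneg]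
  have hden : (0:ℝ) < 2 * (3 + μ - 1) := by nlinarith
  have hp1' : (3 + μ + 1 + Real.sqrt D) / (2 * (3 + μ - 1)) < p := by
    simpa [pS, hD] using hp1
  have hkey : 3 + μ + 1 + Real.sqrt D < p * (2 * (3 + μ - 1)) := by
    exact (div_lt_iff₀ hden).mp hp1'
  have hpgt1 : 1 < p := by nlinarith
  have hp0 : 0 < p := by linarith
  have hQ : 0 < (μ + 2) * p ^ 2 - (μ + 4) * p - 2 := by
    have h2 : Real.sqrt D < 2 * (μ + 2) * p - (μ + 4) := by nlinarith
    nlinarith [hsq, hsqrt_nonneg]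
  have key : 0 < (-3 * (1 / 4 + 1 / (2 * p)) + μ * (p - 1) + (2 / p) * (p - 1)) * p := by
    have : (-3 * (1 / 4 + 1 / (2 * p)) + μ * (p - 1) + (2 / p) * (p - 1)) * p
        = ((μ + 2) * p ^ 2 - (μ + 4) * p - 2) + (-2 * p ^ 2 + 21 / 4 * p - 3 / 2) := by
      field_simp
      ring
    rw [this]
    nlinarith
  nlinarith [key, hp0]
end

section
/- Let ū ≥ 1, s = 1/4 + 1/(2p) with 1 < p ≤ 2, and let φ : [ū, ∞) → ℝ be C¹ with φ(ū) = 0 and φ(u) → 0 as u → ∞, with M² := ∫_ū^∞ u^{3s}(u-ū)^s φ'(u)² du < ∞. Then for all u ≥ ū: u^{2/p} φ(u)² ≤ C·M² for an absolute constant C. -/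
open MeasureTheory Set Filter

/-! Since `φ(u) = -∫_u^∞ φ'`, Cauchy–Schwarz with the weight `w(v) = v^α (v - b)^β` gives
`φ(u)² ≤ (∫_u^∞ w⁻¹) (∫_u^∞ w φ'²)`. When `β < 1 < α + β` the first factor is `O(u^(1-α-β))`:
on `(u, 2u]` the singularity `(v - u)^(-β)` is integrable, and beyond `2u` the integrand is
comparable to `v^(-α-β)`. With `α = 3s`, `β = s` one has `α + β - 1 = 2/p`. -/

theorem sq_integral_le_integral_inv_mul_integral_mul_sq {X : Type*} [MeasurableSpace X]
    {μ : Measure X} {w g : X → ℝ} (hw : ∀ᵐ x ∂μ, 0 < w x) (hg : AEStronglyMeasurable g μ)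
    (hw_inv : Integrable (fun x => (w x)⁻¹) μ) (hwg : Integrable (fun x => w x * g x ^ 2) μ) :
    Integrable g μ ∧ (∫ x, g x ∂μ) ^ 2 ≤ (∫ x, (w x)⁻¹ ∂μ) * ∫ x, w x * g x ^ 2 ∂μ := by
  -- Hölder with `p = q = 2` applied to `F = √w⁻¹` and `G = √(w g²)`, whose product is `|g|`.
  set F : X → ℝ := fun x => √(w x)⁻¹
  set G : X → ℝ := fun x => √(w x * g x ^ 2)
  have hF_sq : ∀ᵐ x ∂μ, F x ^ 2 = (w x)⁻¹ := by
    filter_upwards [hw] with x hx using Real.sq_sqrt (inv_nonneg.2 hx.le)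
  have hG_sq : ∀ᵐ x ∂μ, G x ^ 2 = w x * g x ^ 2 := by
    filter_upwards [hw] with x hx using Real.sq_sqrt (by positivity)
  have hFG : ∀ᵐ x ∂μ, F x * G x = |g x| := by
    filter_upwards [hw] with x hx
    rw [← Real.sqrt_mul (inv_nonneg.2 hx.le), inv_mul_cancel_left₀ hx.ne', Real.sqrt_sq_eq_abs]
  have hF : MemLp F 2 μ := (memLp_two_iff_integrable_sq
    (Real.continuous_sqrt.comp_aestronglyMeasurable hw_inv.aestronglyMeasurable)).2
    (hw_inv.congr (hF_sq.mono fun _ h => h.symm))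
  have hG : MemLp G 2 μ := (memLp_two_iff_integrable_sq
    (Real.continuous_sqrt.comp_aestronglyMeasurable hwg.aestronglyMeasurable)).2
    (hwg.congr (hG_sq.mono fun _ h => h.symm))
  have hg_int : Integrable g μ := by
    refine ((hw_inv.add hwg).div_const 2).mono' hg ?_
    filter_upwards [hF_sq, hG_sq, hFG] with x hF2 hG2 hFG
    rw [Pi.add_apply, Real.norm_eq_abs, ← hFG, ← hF2, ← hG2]
    nlinarith [sq_nonneg (F x - G x)]
  refine ⟨hg_int, ?_⟩
  have hHolder := integral_mul_le_Lp_mul_Lq_of_nonneg (f := F) (g := G)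
    Real.HolderConjugate.two_two
    (Eventually.of_forall fun x => Real.sqrt_nonneg _)
    (Eventually.of_forall fun x => Real.sqrt_nonneg _)
    (by rwa [ENNReal.ofReal_ofNat]) (by rwa [ENNReal.ofReal_ofNat])
  simp only [Real.rpow_two, ← Real.sqrt_eq_rpow] at hHolder
  rw [integral_congr_ae hF_sq, integral_congr_ae hG_sq, integral_congr_ae hFG] at hHolder
  calc (∫ x, g x ∂μ) ^ 2 = |∫ x, g x ∂μ| ^ 2 := (sq_abs _).symm
    _ ≤ (∫ x, |g x| ∂μ) ^ 2 := pow_le_pow_left₀ (abs_nonneg _) abs_integral_le_integral_abs 2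
    _ ≤ (√(∫ x, (w x)⁻¹ ∂μ) * √(∫ x, w x * g x ^ 2 ∂μ)) ^ 2 :=
        pow_le_pow_left₀ (integral_nonneg fun _ => abs_nonneg _) hHolder 2
    _ = (∫ x, (w x)⁻¹ ∂μ) * ∫ x, w x * g x ^ 2 ∂μ := by
        rw [mul_pow, Real.sq_sqrt, Real.sq_sqrt]
        · exact integral_nonneg_of_ae (hG_sq.mono fun x h => (sq_nonneg (G x)).trans_eq h)
        · exact integral_nonneg_of_ae (hF_sq.mono fun x h => (sq_nonneg (F x)).trans_eq h)

theorem integrableOn_and_setIntegral_le_of_le {X : Type*} [MeasurableSpace X] {μ : Measure X}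
    {f g : X → ℝ} {s : Set X} (hs : MeasurableSet s) (hf : Measurable f) (hg : IntegrableOn g s μ)
    (hf_nonneg : ∀ x ∈ s, 0 ≤ f x) (hfg : ∀ x ∈ s, f x ≤ g x) :
    IntegrableOn f s μ ∧ ∫ x in s, f x ∂μ ≤ ∫ x in s, g x ∂μ := by
  have hf_int : IntegrableOn f s μ := by
    refine hg.mono' hf.aestronglyMeasurable ?_
    filter_upwards [ae_restrict_mem hs] with x hx
    rw [Real.norm_of_nonneg (hf_nonneg x hx)]
    exact hfg x hx
  exact ⟨hf_int, setIntegral_mono_on hf_int hg hs hfg⟩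

section WeightIntegral

variable {α β u : ℝ}

theorem setIntegral_Ioc_inv_rpow_mul_sub_rpow_le (hα : 0 ≤ α) (hβ1 : β < 1) (hu : 0 < u) :
    IntegrableOn (fun v => (v ^ α * (v - u) ^ β)⁻¹) (Ioc u (2 * u)) ∧
      ∫ v in Ioc u (2 * u), (v ^ α * (v - u) ^ β)⁻¹ ≤ u ^ (1 - α - β) / (1 - β) := by
  have hle : u ≤ 2 * u := by linarith
  have hsub : IntervalIntegrable (fun v => (v - u) ^ (-β)) volume u (2 * u) := by
    simpa [two_mul] using (intervalIntegral.intervalIntegrable_rpow' (by linarith : -1 < -β)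
      (a := 0) (b := u)).comp_sub_right u
  have hsub_int : ∫ v in Ioc u (2 * u), (v - u) ^ (-β) = u ^ (1 - β) / (1 - β) := by
    rw [← intervalIntegral.integral_of_le hle, intervalIntegral.integral_comp_sub_right
      (fun x => x ^ (-β)), sub_self, show 2 * u - u = u by ring,
      integral_rpow (Or.inl (by linarith)), Real.zero_rpow (by linarith), sub_zero,
      neg_add_eq_sub]
  obtain ⟨hint, hle_int⟩ := integrableOn_and_setIntegral_le_of_le
    (f := fun v => (v ^ α * (v - u) ^ β)⁻¹) measurableSet_Ioc (by fun_prop)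
    (((intervalIntegrable_iff_integrableOn_Ioc_of_le hle).1 hsub).const_mul (u ^ (-α)))
    (fun v hv => inv_nonneg.2 (mul_nonneg (Real.rpow_nonneg (by linarith [hv.1]) _)
      (Real.rpow_nonneg (by linarith [hv.1]) _)))
    (fun v hv => by
      rw [mul_inv, ← Real.rpow_neg (by linarith [hv.1]), ← Real.rpow_neg (by linarith [hv.1])]
      exact mul_le_mul_of_nonneg_right (Real.rpow_le_rpow_of_nonpos hu hv.1.le (by linarith))
        (Real.rpow_nonneg (by linarith [hv.1]) _))
  refine ⟨hint, hle_int.trans_eq ?_⟩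
  rw [integral_const_mul, hsub_int, mul_div_assoc', ← Real.rpow_add hu]
  ring_nf

theorem setIntegral_Ioi_two_mul_inv_rpow_mul_sub_rpow_le (hα : 0 ≤ α) (hβ : 0 ≤ β)
    (hαβ : 1 < α + β) (hu : 0 < u) :
    IntegrableOn (fun v => (v ^ α * (v - u) ^ β)⁻¹) (Ioi (2 * u)) ∧
      ∫ v in Ioi (2 * u), (v ^ α * (v - u) ^ β)⁻¹ ≤ 2 * u ^ (1 - α - β) / (α + β - 1) := by
  have h2u : 0 < 2 * u := by positivity
  obtain ⟨hint, hle_int⟩ := integrableOn_and_setIntegral_le_of_le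
    (f := fun v => (v ^ α * (v - u) ^ β)⁻¹) measurableSet_Ioi (by fun_prop)
    ((integrableOn_Ioi_rpow_of_lt (by linarith : -(α + β) < -1) h2u).const_mul (2 ^ β))
    (fun v hv => inv_nonneg.2 (mul_nonneg (Real.rpow_nonneg (by linarith [mem_Ioi.1 hv]) _)
      (Real.rpow_nonneg (by linarith [mem_Ioi.1 hv]) _)))
    (fun v hv => by
      have hv0 : 0 < v := h2u.trans hv
      calc (v ^ α * (v - u) ^ β)⁻¹ ≤ (v ^ α * (v / 2) ^ β)⁻¹ := by
            gcongr
            linarith [mem_Ioi.1 hv]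
        _ = 2 ^ β * v ^ (-(α + β)) := by
            rw [Real.div_rpow hv0.le zero_le_two, Real.rpow_neg hv0.le, Real.rpow_add hv0]
            field_simp)
  refine ⟨hint, hle_int.trans ?_⟩
  rw [integral_const_mul, integral_Ioi_rpow_of_lt (by linarith) h2u,
    Real.mul_rpow zero_le_two hu.le]
  have h2 : (2 : ℝ) ^ β * 2 ^ (1 - α - β) ≤ 2 := by
    rw [← Real.rpow_add two_pos]
    simpa using Real.rpow_le_rpow_of_exponent_le one_le_two (by linarith : β + (1 - α - β) ≤ 1)
  calc 2 ^ β * (-(2 ^ (-(α + β) + 1) * u ^ (-(α + β) + 1)) / (-(α + β) + 1))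
      = 2 ^ β * 2 ^ (1 - α - β) * u ^ (1 - α - β) / (α + β - 1) := by
        rw [show -(α + β) + 1 = -(α + β - 1) by ring, div_neg, neg_div, neg_neg,
          show -(α + β - 1) = 1 - α - β by ring, mul_div_assoc', mul_assoc]
    _ ≤ 2 * u ^ (1 - α - β) / (α + β - 1) := by
        gcongr

theorem setIntegral_Ioi_inv_rpow_mul_sub_self_rpow_le (hα : 0 ≤ α) (hβ0 : 0 ≤ β) (hβ1 : β < 1)
    (hαβ : 1 < α + β) (hu : 0 < u) :
    IntegrableOn (fun v => (v ^ α * (v - u) ^ β)⁻¹) (Ioi u) ∧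
      ∫ v in Ioi u, (v ^ α * (v - u) ^ β)⁻¹ ≤
        (1 / (1 - β) + 2 / (α + β - 1)) * u ^ (1 - α - β) := by
  obtain ⟨hnear, hnear_le⟩ := setIntegral_Ioc_inv_rpow_mul_sub_rpow_le hα hβ1 hu
  obtain ⟨htail, htail_le⟩ := setIntegral_Ioi_two_mul_inv_rpow_mul_sub_rpow_le hα hβ0 hαβ hu
  have hsplit : Ioc u (2 * u) ∪ Ioi (2 * u) = Ioi u := Ioc_union_Ioi_eq_Ioi (by linarith)
  rw [← hsplit, setIntegral_union (Ioc_disjoint_Ioi le_rfl) measurableSet_Ioi hnear htail]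
  refine ⟨hnear.union htail, ?_⟩
  calc _ ≤ u ^ (1 - α - β) / (1 - β) + 2 * u ^ (1 - α - β) / (α + β - 1) :=
        add_le_add hnear_le htail_le
    _ = _ := by ring

theorem setIntegral_Ioi_inv_rpow_mul_sub_rpow_le {b : ℝ} (hα : 0 ≤ α) (hβ0 : 0 ≤ β)
    (hβ1 : β < 1) (hαβ : 1 < α + β) (hbu : b ≤ u) (hu : 0 < u) :
    IntegrableOn (fun v => (v ^ α * (v - b) ^ β)⁻¹) (Ioi u) ∧
      ∫ v in Ioi u, (v ^ α * (v - b) ^ β)⁻¹ ≤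
        (1 / (1 - β) + 2 / (α + β - 1)) * u ^ (1 - α - β) := by
  obtain ⟨hint, hle⟩ := setIntegral_Ioi_inv_rpow_mul_sub_self_rpow_le hα hβ0 hβ1 hαβ hu
  obtain ⟨hint', hle'⟩ := integrableOn_and_setIntegral_le_of_le
    (f := fun v => (v ^ α * (v - b) ^ β)⁻¹) measurableSet_Ioi (by fun_prop) hint
    (fun v hv => inv_nonneg.2 (mul_nonneg (Real.rpow_nonneg (by linarith [mem_Ioi.1 hv]) _)
      (Real.rpow_nonneg (by linarith [mem_Ioi.1 hv]) _)))
    (fun v hv => by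
      have hvu : u < v := hv
      have : 0 < v ^ α := Real.rpow_pos_of_pos (hu.trans hvu) α
      have : 0 < (v - u) ^ β := Real.rpow_pos_of_pos (by linarith) β
      gcongr)
  exact ⟨hint', hle'.trans hle⟩

end WeightIntegral

theorem sq_le_integral_inv_mul_integral_mul_deriv_sq {φ w : ℝ → ℝ} {a : ℝ}
    (hcont : ContinuousWithinAt φ (Ici a) a) (hdiff : ∀ x ∈ Ioi a, DifferentiableAt ℝ φ x)
    (hlim : Tendsto φ atTop (nhds 0)) (hw : ∀ x ∈ Ioi a, 0 < w x)
    (hw_inv : IntegrableOn (fun x => (w x)⁻¹) (Ioi a))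
    (hwφ : IntegrableOn (fun x => w x * deriv φ x ^ 2) (Ioi a)) :
    φ a ^ 2 ≤ (∫ x in Ioi a, (w x)⁻¹) * ∫ x in Ioi a, w x * deriv φ x ^ 2 := by
  obtain ⟨hφ'_int, hCS⟩ := sq_integral_le_integral_inv_mul_integral_mul_sq
    (ae_restrict_of_forall_mem measurableSet_Ioi hw) (measurable_deriv φ).aestronglyMeasurable
    hw_inv hwφ
  have hFTC : ∫ x in Ioi a, deriv φ x = 0 - φ a := integral_Ioi_of_hasDerivAt_of_tendsto hcont
    (fun x hx => (hdiff x hx).hasDerivAt) hφ'_int hlim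
  rw [zero_sub] at hFTC
  simpa [hFTC] using hCS

theorem rpow_mul_sq_le_mul_integral_rpow_mul_sub_rpow_mul_deriv_sq {α β b u : ℝ} {φ : ℝ → ℝ}
    (hα : 0 ≤ α) (hβ0 : 0 ≤ β) (hβ1 : β < 1) (hαβ : 1 < α + β) (hb : 0 < b) (hbu : b ≤ u)
    (hφ : Differentiable ℝ φ) (hlim : Tendsto φ atTop (nhds 0))
    (hM : IntegrableOn (fun v => v ^ α * (v - b) ^ β * deriv φ v ^ 2) (Ioi b)) :
    u ^ (α + β - 1) * φ u ^ 2 ≤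
      (1 / (1 - β) + 2 / (α + β - 1)) * ∫ v in Ioi b, v ^ α * (v - b) ^ β * deriv φ v ^ 2 := by
  have hu : 0 < u := hb.trans_le hbu
  have hw : ∀ v ∈ Ioi b, 0 < v ^ α * (v - b) ^ β := fun v hv =>
    mul_pos (Real.rpow_pos_of_pos (hb.trans hv) _) (Real.rpow_pos_of_pos (sub_pos.2 hv) _)
  have hw_u : ∀ v ∈ Ioi u, 0 < v ^ α * (v - b) ^ β := fun v hv => hw v (hbu.trans_lt hv)
  obtain ⟨hw_inv, hw_inv_le⟩ := setIntegral_Ioi_inv_rpow_mul_sub_rpow_le hα hβ0 hβ1 hαβ hbu hu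
  have hφu := sq_le_integral_inv_mul_integral_mul_deriv_sq hφ.continuous.continuousWithinAt
    (fun x _ => hφ x) hlim hw_u hw_inv (hM.mono_set (Ioi_subset_Ioi hbu))
  have hM_mono : ∫ v in Ioi u, v ^ α * (v - b) ^ β * deriv φ v ^ 2 ≤
      ∫ v in Ioi b, v ^ α * (v - b) ^ β * deriv φ v ^ 2 :=
    setIntegral_mono_set hM (ae_restrict_of_forall_mem measurableSet_Ioi fun v hv =>
      mul_nonneg (hw v hv).le (sq_nonneg _)) (Ioi_subset_Ioi hbu).eventuallyLE
  have hM_nonneg : 0 ≤ ∫ v in Ioi u, v ^ α * (v - b) ^ β * deriv φ v ^ 2 :=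
    setIntegral_nonneg measurableSet_Ioi fun v hv => mul_nonneg (hw_u v hv).le (sq_nonneg _)
  have hcancel : u ^ (α + β - 1) * u ^ (1 - α - β) = 1 := by
    rw [← Real.rpow_add hu, show α + β - 1 + (1 - α - β) = 0 by ring, Real.rpow_zero]
  calc u ^ (α + β - 1) * φ u ^ 2
      ≤ u ^ (α + β - 1) * ((1 / (1 - β) + 2 / (α + β - 1)) * u ^ (1 - α - β) *
          ∫ v in Ioi b, v ^ α * (v - b) ^ β * deriv φ v ^ 2) := by
        gcongr
        exact hφu.trans (mul_le_mul hw_inv_le hM_mono hM_nonneg (by positivity))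
    _ = _ := by linear_combination (1 / (1 - β) + 2 / (α + β - 1)) *
          (∫ v in Ioi b, v ^ α * (v - b) ^ β * deriv φ v ^ 2) * hcancel

theorem stmt_9 :
    ∃ C > (0 : ℝ), ∀ (ub p : ℝ) (φ : ℝ → ℝ),
      1 ≤ ub → 1 < p → p ≤ 2 →
      ContDiff ℝ 1 φ → φ ub = 0 → Tendsto φ atTop (nhds 0) →
      IntegrableOn
        (fun u => u ^ (3 * (1 / 4 + 1 / (2 * p))) * (u - ub) ^ (1 / 4 + 1 / (2 * p)) *
          (deriv φ u) ^ 2) (Ioi ub) →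
      ∀ u, ub ≤ u →
        u ^ (2 / p) * (φ u) ^ 2 ≤
          C * ∫ v in Ioi ub, v ^ (3 * (1 / 4 + 1 / (2 * p))) *
            (v - ub) ^ (1 / 4 + 1 / (2 * p)) * (deriv φ v) ^ 2 := by
  refine ⟨6, by norm_num, fun ub p φ hub hp1 hp2 hφ _ hlim hM u hu => ?_⟩
  set s := 1 / 4 + 1 / (2 * p) with hs
  have hs_lo : 1 / 2 ≤ s := by
    have : 1 / 4 ≤ 1 / (2 * p) := one_div_le_one_div_of_le (by linarith) (by linarith)
    linarith
  have hs_hi : s ≤ 3 / 4 := by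
    have : 1 / (2 * p) ≤ 1 / 2 := one_div_le_one_div_of_le (by norm_num) (by linarith)
    linarith
  have hexp : 3 * s + s - 1 = 2 / p := by rw [hs]; field_simp; ring
  have hconst : 1 / (1 - s) + 2 / (3 * s + s - 1) ≤ 6 := by
    have h1 : 1 / (1 - s) ≤ 4 := by rw [div_le_iff₀ (by linarith)]; linarith
    have h2 : 2 / (3 * s + s - 1) ≤ 2 := by rw [div_le_iff₀ (by linarith)]; linarith
    linarith
  have hM_nonneg : 0 ≤ ∫ v in Ioi ub, v ^ (3 * s) * (v - ub) ^ s * deriv φ v ^ 2 :=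
    setIntegral_nonneg measurableSet_Ioi fun v hv => mul_nonneg (mul_nonneg
      (Real.rpow_nonneg (by linarith [mem_Ioi.1 hv]) _) (Real.rpow_nonneg (sub_pos.2 hv).le _))
      (sq_nonneg _)
  rw [← hexp]
  exact (rpow_mul_sq_le_mul_integral_rpow_mul_sub_rpow_mul_deriv_sq (by linarith) (by linarith)
    (by linarith) (by linarith) (by linarith) hu (hφ.differentiable one_ne_zero) hlim hM).trans
    (mul_le_mul_of_nonneg_right hconst hM_nonneg)
end

section
/- For 1.5 ≤ μ < 2 and p_S(3+μ) < p ≤ 2, with s = 1/4 + 1/(2p), the exponents α = μ(p-1) + (2/p)(p-1) - 3s and β = 2(p-1) - 1 - s satisfy simultaneously α > 0, β ≥ 0, 2 - β > 0, 1 - β ≥ s, and γ = α + β + 4s - 1 > 2. -/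
theorem stmt_14 (μ p : ℝ) (hμ1 : 1.5 ≤ μ) (hμ2 : μ < 2)
    (hp1 : pS (3 + μ) < p) (hp2 : p ≤ 2) :
    let s := 1 / 4 + 1 / (2 * p)
    let α := μ * (p - 1) + (2 / p) * (p - 1) - 3 * s
    let β := 2 * (p - 1) - 1 - s
    0 < α ∧ 0 ≤ β ∧ 0 < 2 - β ∧ s ≤ 1 - β ∧ 2 < α + β + 4 * s - 1 := by
  intro s α β
  have hμ0 : (0:ℝ) < 2 + μ := by linarith
  set q : ℝ := Real.sqrt ((3 + μ) ^ 2 + 10 * (3 + μ) - 7) with hqdef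
  have hq0 : 0 ≤ q := Real.sqrt_nonneg _
  have hqsq : q ^ 2 = μ ^ 2 + 16 * μ + 32 := by
    rw [hqdef, sq, Real.mul_self_sqrt (by nlinarith)]
    ring
  have hqμ : μ < q := by nlinarith
  have hpS : pS (3 + μ) = (4 + μ + q) / (2 * (2 + μ)) := by
    unfold pS
    rw [← hqdef]
    ring_nf
  rw [hpS, div_lt_iff₀ (by linarith)] at hp1
  -- hp1 : 4 + μ + q < p * (2 * (2 + μ))
  have hp1' : (1:ℝ) < p := by nlinarith
  have hp0 : (0:ℝ) < p := by linarith
  -- the key quadratic inequality:  (2+μ)p² - (4+μ)p - 2 > 0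
  have hquad : 0 < (2 + μ) * p ^ 2 - (4 + μ) * p - 2 := by
    nlinarith [sq_nonneg (p * (2 * (2 + μ)) - (4 + μ) - q), mul_nonneg hq0 (le_of_lt (sub_pos.mpr hp1))]
  -- from μ < 2 :  2p² - 3p - 1 > 0
  have h2 : 0 < 2 * p ^ 2 - 3 * p - 1 := by
    nlinarith [mul_pos (mul_pos (sub_pos.mpr hμ2) hp0) (sub_pos.mpr hp1')]
  refine ⟨?_, ?_, ?_, ?_, ?_⟩
  · -- α > 0
    have hnum : 0 < μ * p ^ 2 + (5 / 4 - μ) * p - 7 / 2 := by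
      nlinarith [mul_nonneg (le_of_lt (sub_pos.mpr hp1')) (sub_nonneg.mpr hp2)]
    have h : α = (μ * p ^ 2 + (5 / 4 - μ) * p - 7 / 2) / p := by
      simp only [α, s]; field_simp; ring
    rw [h]
    exact div_pos hnum hp0
  · -- β ≥ 0
    have hnum : 0 < 8 * p ^ 2 - 13 * p - 2 := by nlinarith
    have h : β = (8 * p ^ 2 - 13 * p - 2) / (4 * p) := by
      simp only [β, s]; field_simp; ring
    rw [h]
    positivity
  · -- 2 - β > 0
    have hs : 0 < s := by
      have : 0 < 1 / (2 * p) := by positivity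
      simp only [s]; linarith
    simp only [β]; linarith
  · -- s ≤ 1 - β
    simp only [β]; linarith
  · -- γ > 2
    have h : α + β + 4 * s - 1 - 2 = ((2 + μ) * p ^ 2 - (4 + μ) * p - 2) / p := by
      simp only [α, β, s]; field_simp; ring
    have h' := div_pos hquad hp0
    rw [← h] at h'
    clear_value s α β
    linarith
end
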